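/- Let X = Σ εₙ xₙ be an a.s. convergent Rademacher series in a Banach space. Then the maximum (essential supremum) of ‖X‖ over all sign choices equals ℓ₁^w((xₙ)) = sup_{‖x*‖≤1} Σ |x*(xₙ)|; in particular P(‖X‖ > ℓ₁^w((xₙ))) = 0. -/

import Mathlib

/-!
Upper bound: for almost every `ω` all signs are `±1`, and a norming functional `f` of `X ω`
gives `‖X ω‖ = ∑ εₙ(ω) f(xₙ) ≤ ∑ |f(xₙ)| ≤ ℓ₁^w((xₙ))`.

Lower bound: fix `f` with `‖f‖ ≤ 1` and `N`, and write `f(X) = ∑_{n<N} εₙ f(xₙ) + t`, where the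
tail `t` is measurable with respect to `σ(εₙ : n ≥ N)`. For one sign `s = ±1` the event `s t ≥ 0`
has positive probability; it is independent of the event `εₙ = s · sign f(xₙ)` for all `n < N`,
which has probability `2⁻ᴺ`. On the intersection `‖X‖ ≥ s f(X) ≥ ∑_{n<N} |f(xₙ)|`, so this
partial sum is at most the essential supremum of `‖X‖`.
-/

open MeasureTheory ProbabilityTheory

/-- `(εₙ)` is a Rademacher sequence: independent, with `P(εₙ = 1) = P(εₙ = -1) = 1/2`. -/
def IsRademacher {Ω : Type*} [MeasurableSpace Ω] (μ : Measure Ω) (ε : ℕ → Ω → ℝ) : Prop :=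
  (∀ n, Measurable (ε n)) ∧ iIndepFun ε μ ∧
    ∀ n, μ {ω | ε n ω = 1} = 1 / 2 ∧ μ {ω | ε n ω = -1} = 1 / 2

/-- The weak-`ℓ₁` norm `ℓ₁^w((xₙ)) = sup_{‖x*‖≤1} ∑ |x*(xₙ)|`, valued in `ℝ≥0∞`. -/
noncomputable def l1w {E : Type*} [NormedAddCommGroup E] [NormedSpace ℝ E]
    (x : ℕ → E) : ENNReal :=
  ⨆ f : {f : E →L[ℝ] ℝ // ‖f‖ ≤ 1}, ∑' n, ENNReal.ofReal |f.1 (x n)|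

open Filter Finset

lemma ofReal_le_tsum_ofReal_abs_of_hasSum {a c : ℕ → ℝ} {y : ℝ} (hc : ∀ n, |c n| ≤ 1)
    (h : HasSum (fun n => c n * a n) y) : ENNReal.ofReal y ≤ ∑' n, ENNReal.ofReal |a n| := by
  refine le_of_tendsto' ((ENNReal.continuous_ofReal.tendsto y).comp h.tendsto_sum_nat) fun N => ?_
  have hterm : ∀ n, c n * a n ≤ |a n| := fun n =>
    calc c n * a n ≤ |c n| * |a n| := by rw [← abs_mul]; exact le_abs_self _
      _ ≤ |a n| := mul_le_of_le_one_left (abs_nonneg _) (hc n)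
  calc ENNReal.ofReal (∑ n ∈ range N, c n * a n)
      ≤ ENNReal.ofReal (∑ n ∈ range N, |a n|) :=
        ENNReal.ofReal_le_ofReal (sum_le_sum fun n _ => hterm n)
    _ = ∑ n ∈ range N, ENNReal.ofReal |a n| :=
        ENNReal.ofReal_sum_of_nonneg fun n _ => abs_nonneg _
    _ ≤ ∑' n, ENNReal.ofReal |a n| := ENNReal.sum_le_tsum _

section WeakL1

variable {E : Type*} [NormedAddCommGroup E] [NormedSpace ℝ E]

lemma tsum_ofReal_abs_le_l1w (x : ℕ → E) {f : E →L[ℝ] ℝ} (hf : ‖f‖ ≤ 1) :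
    ∑' n, ENNReal.ofReal |f (x n)| ≤ l1w x :=
  le_iSup (fun g : {g : E →L[ℝ] ℝ // ‖g‖ ≤ 1} => ∑' n, ENNReal.ofReal |g.1 (x n)|) ⟨f, hf⟩

lemma ofReal_norm_le_l1w_of_hasSum {c : ℕ → ℝ} {x : ℕ → E} {y : E} (hc : ∀ n, |c n| ≤ 1)
    (h : HasSum (fun n => c n • x n) y) : ENNReal.ofReal ‖y‖ ≤ l1w x := by
  obtain ⟨f, hf, hfy⟩ := exists_dual_vector'' ℝ y
  have hfh : HasSum (fun n => c n * f (x n)) (f y) := by simpa using f.hasSum h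
  calc ENNReal.ofReal ‖y‖ = ENNReal.ofReal (f y) := by rw [hfy]; rfl
    _ ≤ ∑' n, ENNReal.ofReal |f (x n)| := ofReal_le_tsum_ofReal_abs_of_hasSum hc hfh
    _ ≤ l1w x := tsum_ofReal_abs_le_l1w x hf

end WeakL1

lemma le_essSup_of_measure_ne_zero {α β : Type*} [MeasurableSpace α] {μ : Measure α}
    [CompleteLinearOrder β] {f : α → β} {s : Set α} {c : β} (hs : μ s ≠ 0)
    (h : ∀ᵐ a ∂μ, a ∈ s → c ≤ f a) : c ≤ essSup f μ := by
  by_contra hlt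
  refine hs (measure_eq_zero_iff_ae_notMem.2 ?_)
  filter_upwards [h, ae_lt_of_essSup_lt (not_le.1 hlt)] with a hc hfc ha
  exact (hc ha).not_gt hfc

lemma exists_sign_measure_nonneg_mul_ne_zero {α : Type*} [MeasurableSpace α] (μ : Measure α)
    [NeZero μ] (g : α → ℝ) : ∃ s : ℝ, (s = 1 ∨ s = -1) ∧ μ {a | 0 ≤ s * g a} ≠ 0 := by
  by_contra! h
  have hcover : {a | 0 ≤ 1 * g a} ∪ {a | 0 ≤ -1 * g a} = Set.univ := by
    ext a
    simp only [Set.mem_union, Set.mem_ofPred_eq, Set.mem_univ, iff_true]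
    rcases le_total 0 (g a) with hg | hg
    exacts [Or.inl (by linarith), Or.inr (by linarith)]
  have := measure_union_le (μ := μ) {a | 0 ≤ 1 * g a} {a | 0 ≤ -1 * g a}
  rw [hcover, h 1 (Or.inl rfl), h (-1) (Or.inr rfl), add_zero, nonpos_iff_eq_zero,
    Measure.measure_univ_eq_zero] at this
  exact NeZero.ne μ this

section TailSum

variable {Ω : Type*} {ε : ℕ → Ω → ℝ}

/-- The tail `∑_{k ≥ N} εₖ aₖ`, taken as the limit of its partial sums so that it is measurable
with respect to `σ(εₖ : k ≥ N)`; its value where the partial sums diverge is junk. -/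
noncomputable def tailSum (ε : ℕ → Ω → ℝ) (a : ℕ → ℝ) (N : ℕ) (ω : Ω) : ℝ :=
  limUnder atTop fun M => ∑ k ∈ range M, ε (k + N) ω * a (k + N)

lemma measurable_tailSum [MeasurableSpace Ω] (a : ℕ → ℝ) (N : ℕ) :
    Measurable[⨆ n ∈ Set.Ici N, MeasurableSpace.comap (ε n) inferInstance] (tailSum ε a N) := by
  have hpartial : ∀ M,
      StronglyMeasurable[⨆ n ∈ Set.Ici N, MeasurableSpace.comap (ε n) inferInstance] fun ω => ∑ k ∈ range M, ε (k + N) ω * a (k + N) := fun M =>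
    Measurable.stronglyMeasurable <| Finset.measurable_sum _ fun k _ => Measurable.mul_const
      ((comap_measurable (ε (k + N))).mono
        (le_biSup (fun n => MeasurableSpace.comap (ε n) inferInstance) (Nat.le_add_left N k))
        le_rfl) _
  exact (@StronglyMeasurable.limUnder _ _ _
    (⨆ n ∈ Set.Ici N, MeasurableSpace.comap (ε n) inferInstance) _ _ atTop _ _ _ _
    hpartial).measurable

lemma tailSum_eq_of_hasSum {a : ℕ → ℝ} {ω : Ω} {y : ℝ}
    (h : HasSum (fun n => ε n ω * a n) y) (N : ℕ) :
    tailSum ε a N ω = y - ∑ i ∈ range N, ε i ω * a i :=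
  ((hasSum_nat_add_iff' N).2 h).tendsto_sum_nat.limUnder_eq

end TailSum

namespace IsRademacher

variable {Ω : Type*} [MeasurableSpace Ω] {μ : Measure Ω} {ε : ℕ → Ω → ℝ}

lemma ae_eq_one_or_eq_neg_one [IsProbabilityMeasure μ] (hε : IsRademacher μ ε) :
    ∀ᵐ ω ∂μ, ∀ n, ε n ω = 1 ∨ ε n ω = -1 := by
  refine ae_all_iff.2 fun n => ?_
  have hdisj : Disjoint {ω | ε n ω = 1} {ω | ε n ω = -1} :=
    Set.disjoint_left.2 fun ω (h1 : ε n ω = 1) (h2 : ε n ω = -1) => by linarith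
  have hm : ∀ r : ℝ, MeasurableSet {ω | ε n ω = r} := fun r =>
    hε.1 n (measurableSet_singleton r)
  change ∀ᵐ ω ∂μ, ω ∈ {ω | ε n ω = 1} ∪ {ω | ε n ω = -1}
  rw [ae_mem_iff_measure_eq ((hm 1).union (hm (-1))).nullMeasurableSet,
    measure_union hdisj (hm (-1)), (hε.2.2 n).1, (hε.2.2 n).2, measure_univ,
    ENNReal.add_halves]

lemma measure_signs_inter_tail (hε : IsRademacher μ ε) {σ : ℕ → ℝ}
    (hσ : ∀ i, σ i = 1 ∨ σ i = -1) (N : ℕ) {T : Set Ω}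
    (hT : MeasurableSet[⨆ n ∈ Set.Ici N, MeasurableSpace.comap (ε n) inferInstance] T) :
    μ ((⋂ i ∈ range N, ε i ⁻¹' {σ i}) ∩ T) = (1 / 2) ^ N * μ T := by
  have hindep := indep_iSup_of_disjoint (fun n => (hε.1 n).comap_le) hε.2.1.iIndep
    (Set.Iio_disjoint_Ici le_rfl : Disjoint (Set.Iio N) (Set.Ici N))
  have hsign : ∀ i, MeasurableSet[MeasurableSpace.comap (ε i) inferInstance] (ε i ⁻¹' {σ i}) :=
    fun i => ⟨{σ i}, measurableSet_singleton _, rfl⟩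
  have hA : MeasurableSet[⨆ n ∈ Set.Iio N, MeasurableSpace.comap (ε n) inferInstance]
      (⋂ i ∈ range N, ε i ⁻¹' {σ i}) :=
    MeasurableSet.biInter (range N).countable_toSet fun i hi =>
      le_biSup (fun n => MeasurableSpace.comap (ε n) inferInstance) (by simpa using hi) _ (hsign i)
  have hhalf : ∀ i, μ (ε i ⁻¹' {σ i}) = 1 / 2 := fun i => by
    rcases hσ i with h | h <;> rw [h]
    exacts [(hε.2.2 i).1, (hε.2.2 i).2]
  rw [(Indep_iff _ _ μ).1 hindep _ _ hA hT, hε.2.1.meas_biInter fun i _ => hsign i]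
  simp [hhalf]

lemma ofReal_sum_abs_le_essSup [IsProbabilityMeasure μ] (hε : IsRademacher μ ε) {a : ℕ → ℝ}
    {Y : Ω → ℝ} (hY : ∀ᵐ ω ∂μ, HasSum (fun n => ε n ω * a n) (Y ω)) (N : ℕ) :
    ENNReal.ofReal (∑ i ∈ range N, |a i|) ≤ essSup (fun ω => ENNReal.ofReal |Y ω|) μ := by
  obtain ⟨s, hs, hT⟩ := exists_sign_measure_nonneg_mul_ne_zero μ (tailSum ε a N)
  have habs_s : |s| = 1 := by rcases hs with rfl | rfl <;> norm_num
  have hss : s * s = 1 := by rcases hs with rfl | rfl <;> norm_num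
  set σ : ℕ → ℝ := fun i => if 0 ≤ a i then s else -s
  have hσ : ∀ i, σ i = 1 ∨ σ i = -1 := fun i => by
    by_cases hi : 0 ≤ a i <;> rcases hs with rfl | rfl <;> simp [σ, hi]
  have hσa : ∀ i, σ i * a i = s * |a i| := fun i => by
    by_cases hi : 0 ≤ a i
    · simp [σ, hi, abs_of_nonneg hi]
    · simp [σ, hi, abs_of_neg (not_le.1 hi)]
  set A := ⋂ i ∈ range N, ε i ⁻¹' {σ i}
  set T := {ω | 0 ≤ s * tailSum ε a N ω}
  have hAT : μ (A ∩ T) ≠ 0 := by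
    rw [hε.measure_signs_inter_tail hσ N (T := T)
      (((measurable_tailSum a N).const_mul s) (measurableSet_Ici (a := 0)))]
    exact mul_ne_zero (by simp) hT
  refine le_essSup_of_measure_ne_zero hAT ?_
  filter_upwards [hY] with ω hω ⟨hA, (hTω : 0 ≤ s * tailSum ε a N ω)⟩
  have hhead : ∑ i ∈ range N, ε i ω * a i = s * ∑ i ∈ range N, |a i| := by
    rw [mul_sum]
    refine sum_congr rfl fun i hi => ?_
    rw [show ε i ω = σ i from Set.mem_iInter₂.1 hA i hi, hσa]
  have hsY : s * Y ω = ∑ i ∈ range N, |a i| + s * tailSum ε a N ω := by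
    rw [tailSum_eq_of_hasSum hω N, hhead, mul_sub, ← mul_assoc, hss]
    ring
  refine ENNReal.ofReal_le_ofReal ?_
  calc ∑ i ∈ range N, |a i| ≤ s * Y ω := by linarith
    _ ≤ |s * Y ω| := le_abs_self _
    _ = |Y ω| := by rw [abs_mul, habs_s, one_mul]

lemma ae_ofReal_norm_le_l1w [IsProbabilityMeasure μ] (hε : IsRademacher μ ε)
    {E : Type*} [NormedAddCommGroup E] [NormedSpace ℝ E] {x : ℕ → E} {X : Ω → E}
    (hX : ∀ᵐ ω ∂μ, HasSum (fun n => ε n ω • x n) (X ω)) :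
    ∀ᵐ ω ∂μ, ENNReal.ofReal ‖X ω‖ ≤ l1w x := by
  filter_upwards [hX, hε.ae_eq_one_or_eq_neg_one] with ω hω hsign
  exact ofReal_norm_le_l1w_of_hasSum (fun n => by rcases hsign n with h | h <;> simp [h]) hω

lemma l1w_le_essSup [IsProbabilityMeasure μ] (hε : IsRademacher μ ε)
    {E : Type*} [NormedAddCommGroup E] [NormedSpace ℝ E] {x : ℕ → E} {X : Ω → E}
    (hX : ∀ᵐ ω ∂μ, HasSum (fun n => ε n ω • x n) (X ω)) :
    l1w x ≤ essSup (fun ω => ENNReal.ofReal ‖X ω‖) μ := by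
  refine iSup_le fun ⟨f, hf⟩ => ?_
  have hfX : ∀ᵐ ω ∂μ, HasSum (fun n => ε n ω * f (x n)) (f (X ω)) :=
    hX.mono fun ω h => by simpa using f.hasSum h
  have hfX_le : ∀ ω, ENNReal.ofReal |f (X ω)| ≤ ENNReal.ofReal ‖X ω‖ := fun ω =>
    ENNReal.ofReal_le_ofReal (by simpa using f.le_of_opNorm_le hf (X ω))
  rw [ENNReal.tsum_eq_iSup_nat]
  refine iSup_le fun N => ?_
  calc ∑ n ∈ range N, ENNReal.ofReal |f (x n)|
      = ENNReal.ofReal (∑ n ∈ range N, |f (x n)|) :=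
        (ENNReal.ofReal_sum_of_nonneg fun n _ => abs_nonneg _).symm
    _ ≤ essSup (fun ω => ENNReal.ofReal |f (X ω)|) μ := hε.ofReal_sum_abs_le_essSup hfX N
    _ ≤ essSup (fun ω => ENNReal.ofReal ‖X ω‖) μ := essSup_mono_ae (.of_forall hfX_le)

end IsRademacher

theorem stmt15_general {Ω : Type*} [MeasurableSpace Ω] (μ : Measure Ω) [IsProbabilityMeasure μ]
    {E : Type*} [NormedAddCommGroup E] [NormedSpace ℝ E]
    (ε : ℕ → Ω → ℝ) (hε : IsRademacher μ ε) (x : ℕ → E) (X : Ω → E)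
    (hX : ∀ᵐ ω ∂μ, HasSum (fun n => ε n ω • x n) (X ω)) :
    essSup (fun ω => ENNReal.ofReal ‖X ω‖) μ = l1w x ∧
      μ {ω | l1w x < ENNReal.ofReal ‖X ω‖} = 0 := by
  have hupper := hε.ae_ofReal_norm_le_l1w hX
  refine ⟨le_antisymm (essSup_le_of_ae_le _ hupper) (hε.l1w_le_essSup hX), ?_⟩
  exact measure_eq_zero_iff_ae_notMem.2 (hupper.mono fun ω h => not_lt.2 h)

theorem stmt15 {Ω : Type*} [MeasurableSpace Ω] (μ : Measure Ω) [IsProbabilityMeasure μ]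
    {E : Type*} [NormedAddCommGroup E] [NormedSpace ℝ E] [CompleteSpace E]
    (ε : ℕ → Ω → ℝ) (hε : IsRademacher μ ε) (x : ℕ → E) (X : Ω → E)
    (hX : ∀ᵐ ω ∂μ, HasSum (fun n => ε n ω • x n) (X ω)) :
    essSup (fun ω => ENNReal.ofReal ‖X ω‖) μ = l1w x ∧
      μ {ω | l1w x < ENNReal.ofReal ‖X ω‖} = 0 :=
  stmt15_general μ ε hε x X hX
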